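/- Let μ be a partition and let r ≥ 0 be an integer. For an integer n ≥ ℓ(μ) (with the convention μ_i = 0 for i > ℓ(μ)) define S_r(n) = ∑_{j=0}^{r} ( t^{−jn} / ∏_{a=1}^{j} (t^a − 1) ) · e_{r−j}( q^{μ₁} t^{−1}, q^{μ₂} t^{−2}, …, q^{μ_n} t^{−n} ) ∈ ℚ(q,t), where e_k is the k-th elementary symmetric polynomial (e_k of fewer than k entries is 0, e₀ = 1, and the empty product for j = 0 is 1). Then S_r(n) is independent of n: for all integers n, n′ ≥ ℓ(μ) one has S_r(n) = S_r(n′). -/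

import Mathlib

noncomputable section

/-- The field `ℚ(q,t)`. -/
abbrev F2 : Type := FractionRing (MvPolynomial (Fin 2) ℚ)

def qq : F2 := algebraMap (MvPolynomial (Fin 2) ℚ) F2 (MvPolynomial.X 0)
def tt : F2 := algebraMap (MvPolynomial (Fin 2) ℚ) F2 (MvPolynomial.X 1)

/-- `S_r(n) = ∑_{j=0}^{r} (t^{-jn} / ∏_{a=1}^{j} (t^a - 1)) · e_{r-j}(q^{μ₁}t^{-1}, …, q^{μ_n}t^{-n})`,
where the partition `μ` is identified with its Young diagram `Y`, `μ_i = Y.rowLen (i-1)`,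
and `e_k` is the `k`-th elementary symmetric polynomial of the listed `n` quantities. -/
def S (Y : YoungDiagram) (r n : ℕ) : F2 :=
  ∑ j ∈ Finset.range (r + 1),
    (tt ^ (-(j * n : ℤ)) / ∏ a ∈ Finset.range j, (tt ^ (a + 1) - 1)) *
      Multiset.esymm
        (((List.range n).map fun i => qq ^ Y.rowLen i * tt ^ (-(i + 1 : ℤ)) : List F2) :
          Multiset F2) (r - j)

/-!
Write `S_r(n) = [z^r] C_n(z) E_n(z)` with `C_n(z) = ∑_j t^{-jn} z^j / ∏_{a ≤ j} (t^a - 1)`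
and `E_n(z) = ∏_{i ≤ n} (1 + x_i z)` the generating series of the `e_k(x_1, …, x_n)`.
For `n ≥ ℓ(μ)` the new variable is `x_{n+1} = t^{-(n+1)}`, so
`E_{n+1} = (1 + t^{-(n+1)} z) E_n`, while the coefficient identity
`c_{j+1}(n) = c_{j+1}(n+1) + t^{-(n+1)} c_j(n+1)` says exactly `C_n = (1 + t^{-(n+1)} z) C_{n+1}`;
hence the product `C_n E_n` does not change with `n`.
-/

open Finset PowerSeries

theorem Multiset.esymm_zero {R : Type*} [CommSemiring R] (s : Multiset R) : s.esymm 0 = 1 := by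
  simp [Multiset.esymm]

theorem Multiset.esymm_cons_succ {R : Type*} [CommSemiring R] (x : R) (s : Multiset R) (k : ℕ) :
    (x ::ₘ s).esymm (k + 1) = s.esymm (k + 1) + x * s.esymm k := by
  simp [Multiset.esymm, Multiset.powersetCard_cons, Multiset.map_map,
    Multiset.sum_map_mul_left]

section GeneratingSeries

variable {R : Type*} [CommRing R]

theorem PowerSeries.mk_esymm_cons (x : R) (s : Multiset R) :
    mk (x ::ₘ s).esymm = (1 + C x * X) * mk s.esymm := by
  ext (_ | k)
  · simp [Multiset.esymm_zero]
  · simp [add_mul, mul_assoc, coeff_succ_X_mul, Multiset.esymm_cons_succ]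

theorem PowerSeries.coeff_mk_mul_mk (a b : ℕ → R) (r : ℕ) :
    coeff r (mk a * mk b) = ∑ j ∈ range (r + 1), a j * b (r - j) := by
  simp [coeff_mul, Nat.sum_antidiagonal_eq_sum_range_succ fun i k => a i * b k]

theorem sum_mul_esymm_cons {c c' : ℕ → R} {x : R} (hc : mk c = mk c' * (1 + C x * X))
    (s : Multiset R) (r : ℕ) :
    ∑ j ∈ range (r + 1), c j * s.esymm (r - j) =
      ∑ j ∈ range (r + 1), c' j * (x ::ₘ s).esymm (r - j) := by
  rw [← coeff_mk_mul_mk, ← coeff_mk_mul_mk, hc, mk_esymm_cons, mul_assoc]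

end GeneratingSeries

section Stable

variable {K : Type*} [Field K] {t : K}

def stableCoeff (t : K) (j n : ℕ) : K :=
  t ^ (-(j * n : ℤ)) / ∏ a ∈ range j, (t ^ (a + 1) - 1)

def stableSum (t : K) (y : ℕ → K) (r n : ℕ) : K :=
  ∑ j ∈ range (r + 1), stableCoeff t j n *
    Multiset.esymm (((List.range n).map y : List K) : Multiset K) (r - j)

theorem stableCoeff_succ (ht₀ : t ≠ 0) (ht : ∀ a : ℕ, t ^ (a + 1) ≠ 1) (j n : ℕ) :
    stableCoeff t (j + 1) n =
      stableCoeff t (j + 1) (n + 1) + stableCoeff t j (n + 1) * t ^ (-(n + 1 : ℤ)) := by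
  have hP : ∏ a ∈ range j, (t ^ (a + 1) - 1) ≠ 0 :=
    prod_ne_zero_iff.2 fun a _ => sub_ne_zero.2 (ht a)
  have hj : t ^ (j + 1) - 1 ≠ 0 := sub_ne_zero.2 (ht j)
  simp only [stableCoeff, prod_range_succ]
  field_simp
  have hshift : t ^ (-(((j + 1 : ℕ) : ℤ) * n)) =
      t ^ (-(((j + 1 : ℕ) : ℤ) * (n + 1 : ℕ))) * t ^ (j + 1) := by
    rw [← zpow_natCast, ← zpow_add₀ ht₀]; push_cast; ring_nf
  have hmerge : t ^ (-((j : ℤ) * (n + 1 : ℕ))) * t ^ (-(n + 1 : ℤ)) =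
      t ^ (-(((j + 1 : ℕ) : ℤ) * (n + 1 : ℕ))) := by
    rw [← zpow_add₀ ht₀]; push_cast; ring_nf
  rw [hshift, mul_assoc, hmerge]
  ring

theorem mk_stableCoeff (ht₀ : t ≠ 0) (ht : ∀ a : ℕ, t ^ (a + 1) ≠ 1) (n : ℕ) :
    mk (stableCoeff t · n) =
      mk (stableCoeff t · (n + 1)) * (1 + C (t ^ (-(n + 1 : ℤ))) * X) := by
  ext (_ | j)
  · simp [stableCoeff]
  · rw [mul_add, mul_one, map_add, ← mul_assoc, coeff_succ_mul_X, coeff_mul_C, coeff_mk,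
      coeff_mk, coeff_mk, stableCoeff_succ ht₀ ht]

theorem stableSum_succ (ht₀ : t ≠ 0) (ht : ∀ a : ℕ, t ^ (a + 1) ≠ 1) {y : ℕ → K}
    {n : ℕ} (hy : y n = t ^ (-(n + 1 : ℤ))) (r : ℕ) :
    stableSum t y r (n + 1) = stableSum t y r n := by
  have hcons : (((List.range (n + 1)).map y : List K) : Multiset K) =
      y n ::ₘ (((List.range n).map y : List K) : Multiset K) := by
    simp only [← Multiset.map_coe, Multiset.coe_range, Multiset.range_succ, Multiset.map_cons]
  rw [stableSum, stableSum, hcons, hy, sum_mul_esymm_cons (mk_stableCoeff ht₀ ht n)]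

theorem stableSum_eq_of_le (ht₀ : t ≠ 0) (ht : ∀ a : ℕ, t ^ (a + 1) ≠ 1) {y : ℕ → K}
    {N : ℕ} (hy : ∀ i ≥ N, y i = t ^ (-(i + 1 : ℤ))) (r : ℕ) {n : ℕ} (hn : N ≤ n) :
    stableSum t y r n = stableSum t y r N := by
  induction n, hn using Nat.le_induction with
  | base => rfl
  | succ m hm ih => rw [stableSum_succ ht₀ ht (hy m hm), ih]

end Stable

theorem tt_ne_zero : tt ≠ 0 :=
  (map_ne_zero_iff _ (IsFractionRing.injective _ _)).2 (MvPolynomial.X_ne_zero 1)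

theorem tt_pow_succ_ne_one (a : ℕ) : tt ^ (a + 1) ≠ 1 := by
  rw [tt, ← map_pow, ← map_one (algebraMap (MvPolynomial (Fin 2) ℚ) F2),
    (IsFractionRing.injective _ _).ne_iff]
  intro h
  simpa [MvPolynomial.totalDegree_X_pow] using congrArg MvPolynomial.totalDegree h

theorem YoungDiagram.rowLen_eq_zero_of_colLen_le {Y : YoungDiagram} {i : ℕ}
    (hi : Y.colLen 0 ≤ i) : Y.rowLen i = 0 := by
  by_contra h
  have hmem : (i, 0) ∈ Y := YoungDiagram.mem_iff_lt_rowLen.2 (Nat.pos_of_ne_zero h)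
  exact (YoungDiagram.mem_iff_lt_colLen.1 hmem).not_ge hi

theorem S_eq_stableSum (Y : YoungDiagram) (r n : ℕ) :
    S Y r n = stableSum tt (fun i => qq ^ Y.rowLen i * tt ^ (-(i + 1 : ℤ))) r n := rfl

/-- `S_r(n)` is independent of `n` for `n ≥ ℓ(μ) = Y.colLen 0`. -/
theorem S_stable (Y : YoungDiagram) (r : ℕ) (n n' : ℕ)
    (hn : Y.colLen 0 ≤ n) (hn' : Y.colLen 0 ≤ n') :
    S Y r n = S Y r n' := by
  have hy : ∀ i ≥ Y.colLen 0, qq ^ Y.rowLen i * tt ^ (-(i + 1 : ℤ)) = tt ^ (-(i + 1 : ℤ)) :=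
    fun i hi => by rw [YoungDiagram.rowLen_eq_zero_of_colLen_le hi, pow_zero, one_mul]
  have hstable := fun m (hm : Y.colLen 0 ≤ m) =>
    stableSum_eq_of_le tt_ne_zero tt_pow_succ_ne_one hy r hm
  rw [S_eq_stableSum, S_eq_stableSum, hstable n hn, hstable n' hn']
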